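/- Let E be a skeletally small weakly idempotent complete exact category with enough projectives P and let T be a subcategory of E satisfying condition (A). Then E_T = (A_T, S_T) is an exact category, and it has enough projectives given by P_T = add{Im f | Q ∈ P and f: Q → T' is an admissible left T-approximation with T' ∈ T}. -/

import Mathlib

open CategoryTheory CategoryTheory.Limits ZeroObject

namespace TauTilting

universe w v u

/-- A class of "conflations" (kernel–cokernel pairs) on an additive category,
the datum underlying an exact structure in the sense of Quillen. -/
structure ConflationStruct (C : Type u) [Category.{v} C] [Preadditive C] where
  /-- `IsConflation f g` means that `X ↣ Y ↠ Z` given by `f, g` is a conflation. -/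
  IsConflation : ∀ ⦃X Y Z : C⦄, (X ⟶ Y) → (Y ⟶ Z) → Prop

namespace ConflationStruct

variable {C : Type u} [Category.{v} C] [Preadditive C] (S : ConflationStruct C)

/-- A morphism is an inflation if it occurs as the first map of a conflation. -/
def IsInflation {X Y : C} (f : X ⟶ Y) : Prop :=
  ∃ (Z : C) (g : Y ⟶ Z), S.IsConflation f g

/-- A morphism is a deflation if it occurs as the second map of a conflation. -/
def IsDeflation {Y Z : C} (g : Y ⟶ Z) : Prop :=
  ∃ (X : C) (f : X ⟶ Y), S.IsConflation f g

/-- Quillen's axioms for an exact structure: conflations are kernel-cokernel pairs,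
the class of conflations is closed under isomorphisms, identities are inflations and
deflations, inflations and deflations are closed under composition, pushouts of
inflations along arbitrary morphisms exist and are inflations, and dually. -/
structure IsExactStructure : Prop where
  ker_coker : ∀ {X Y Z : C} {f : X ⟶ Y} {g : Y ⟶ Z}, S.IsConflation f g →
    ∃ w : f ≫ g = 0, Nonempty (IsLimit (KernelFork.ofι f w)) ∧
      Nonempty (IsColimit (CokernelCofork.ofπ g w))
  iso_closed : ∀ {X X' Y Y' Z Z' : C} (eX : X' ≅ X) (eY : Y' ≅ Y) (eZ : Z' ≅ Z)
    {f : X ⟶ Y} {g : Y ⟶ Z}, S.IsConflation f g →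
    S.IsConflation (eX.hom ≫ f ≫ eY.inv) (eY.hom ≫ g ≫ eZ.inv)
  id_inflation : ∀ X : C, S.IsInflation (𝟙 X)
  id_deflation : ∀ X : C, S.IsDeflation (𝟙 X)
  inflation_comp : ∀ {X Y Z : C} {f : X ⟶ Y} {g : Y ⟶ Z},
    S.IsInflation f → S.IsInflation g → S.IsInflation (f ≫ g)
  deflation_comp : ∀ {X Y Z : C} {f : X ⟶ Y} {g : Y ⟶ Z},
    S.IsDeflation f → S.IsDeflation g → S.IsDeflation (f ≫ g)
  pushout_inflation : ∀ {X Y Z : C} (f : X ⟶ Y) (h : X ⟶ Z), S.IsInflation f →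
    ∃ (W : C) (h' : Y ⟶ W) (f' : Z ⟶ W), IsPushout f h h' f' ∧ S.IsInflation f'
  pullback_deflation : ∀ {X Y Z : C} (g : X ⟶ Z) (h : Y ⟶ Z), S.IsDeflation g →
    ∃ (W : C) (h' : W ⟶ X) (g' : W ⟶ Y), IsPullback h' g' g h ∧ S.IsDeflation g'

/-- An object `P` is projective relative to the exact structure: `Hom(P,-)` sends
conflations to short exact sequences, equivalently morphisms out of `P` lift along
deflations. -/
def IsProjObj (P : C) : Prop :=
  ∀ ⦃Y Z : C⦄ (g : Y ⟶ Z), S.IsDeflation g → ∀ u : P ⟶ Z, ∃ v : P ⟶ Y, v ≫ g = u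

/-- The class of projective objects. -/
def projClass : Set C := {P | S.IsProjObj P}

/-- The exact category has enough projectives. -/
def HasEnoughProjectives : Prop :=
  ∀ X : C, ∃ (P : C) (p : P ⟶ X), S.IsProjObj P ∧ S.IsDeflation p

/-- `Fac T` : objects admitting a deflation from an object of `T`. -/
def Fac (T : Set C) : Set C :=
  {X | ∃ (T' : C) (g : T' ⟶ X), T' ∈ T ∧ S.IsDeflation g}

/-- `Sub T` : objects admitting an inflation into an object of `T`. -/
def Sub (T : Set C) : Set C :=
  {X | ∃ (T' : C) (f : X ⟶ T'), T' ∈ T ∧ S.IsInflation f}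

/-- `Ext¹(X, Y) = 0`, expressed by the splitting of all conflations `Y ↣ E ↠ X`. -/
def ext1Zero (X Y : C) : Prop :=
  ∀ (E : C) (f : Y ⟶ E) (g : E ⟶ X), S.IsConflation f g → ∃ s : X ⟶ E, s ≫ g = 𝟙 X

/-- A morphism is admissible if it factors as a deflation followed by an inflation. -/
def IsAdmissible {X Y : C} (f : X ⟶ Y) : Prop :=
  ∃ (K : C) (d : X ⟶ K) (i : K ⟶ Y), S.IsDeflation d ∧ S.IsInflation i ∧ d ≫ i = f

end ConflationStruct

section Approx

variable {C : Type u} [Category.{v} C]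

/-- `f : P ⟶ X` is a left `T`-approximation. -/
def LeftApprox (T : Set C) {P X : C} (f : P ⟶ X) : Prop :=
  X ∈ T ∧ ∀ (T' : C), T' ∈ T → ∀ u : P ⟶ T', ∃ v : X ⟶ T', f ≫ v = u

/-- `f : X ⟶ M` is a right `T`-approximation. -/
def RightApprox (T : Set C) {X M : C} (f : X ⟶ M) : Prop :=
  X ∈ T ∧ ∀ (T' : C), T' ∈ T → ∀ u : T' ⟶ M, ∃ v : T' ⟶ X, v ≫ f = u

/-- A class of objects closed under direct summands. -/
def SummandClosed (T : Set C) : Prop :=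
  ∀ {X Z : C}, Z ∈ T → ∀ (i : X ⟶ Z) (r : Z ⟶ X), i ≫ r = 𝟙 X → X ∈ T

end Approx

section Additive

variable {C : Type u} [Category.{v} C] [Preadditive C] [HasZeroObject C] [HasBinaryBiproducts C]

/-- An additively closed subcategory: closed under isomorphisms, finite direct sums
and direct summands. -/
structure AdditivelyClosed (T : Set C) : Prop where
  mem_of_iso : ∀ {X Y : C}, (X ≅ Y) → X ∈ T → Y ∈ T
  zero_mem : (0 : C) ∈ T
  biprod_mem : ∀ {X Y : C}, X ∈ T → Y ∈ T → (X ⊞ Y) ∈ T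
  summand_mem : SummandClosed T

/-- An object is indecomposable if it is nonzero and any biproduct decomposition is
trivial. -/
def IsIndecomposable (X : C) : Prop :=
  ¬ IsZero X ∧ ∀ (A B : C), (X ≅ A ⊞ B) → IsZero A ∨ IsZero B

/-- The cardinality of the set of isomorphism classes of indecomposable objects in `T`. -/
noncomputable def numIndec (T : Set C) : Cardinal :=
  Cardinal.mk
    (Quot fun (X Y : {X : C // X ∈ T ∧ IsIndecomposable X}) => Nonempty ((X : C) ≅ (Y : C)))

end Additive

section AddOf

variable {C : Type u} [Category.{v} C] [Preadditive C] [HasFiniteBiproducts C]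

/-- The additive closure of a class of objects : direct summands of finite direct
sums of its objects. -/
def addOf (X : Set C) : Set C :=
  {Y | ∃ (n : ℕ) (f : Fin n → C), (∀ j, f j ∈ X) ∧
    ∃ (i : Y ⟶ ⨁ f) (r : (⨁ f) ⟶ Y), i ≫ r = 𝟙 Y}

/-- A Krull-Schmidt category: every object is a finite direct sum of objects with
local endomorphism ring. -/
def IsKrullSchmidt (C : Type u) [Category.{v} C] [Preadditive C] [HasFiniteBiproducts C] : Prop :=
  ∀ X : C, ∃ (n : ℕ) (f : Fin n → C), (∀ j, IsLocalRing (End (f j))) ∧ Nonempty (X ≅ ⨁ f)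

end AddOf

namespace ConflationStruct

variable {C : Type u} [Category.{v} C] [Preadditive C] (S : ConflationStruct C)

section TauTilt

/-- The existence of an exact sequence `P → T⁰ ↠ T¹` with `T⁰, T¹ ∈ T` whose first
map is a left `T`-approximation; the exact sequence is encoded by the factorization
of the first map as a deflation onto its image followed by an inflation which is a
kernel of the deflation `T⁰ ↠ T¹`. -/
def ApproxSeq (T : Set C) (P : C) : Prop :=
  ∃ (K T0 T1 : C) (d : P ⟶ K) (i : K ⟶ T0) (g : T0 ⟶ T1),
    T1 ∈ T ∧ S.IsDeflation d ∧ S.IsConflation i g ∧ LeftApprox T (d ≫ i)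

variable [HasZeroObject C] [HasBinaryBiproducts C]

/-- A τ-rigid subcategory: additively closed with `Ext¹(T, Fac T) = 0`. -/
def IsTauRigid (T : Set C) : Prop :=
  AdditivelyClosed T ∧ ∀ T' ∈ T, ∀ X ∈ S.Fac T, S.ext1Zero T' X

/-- A support τ-tilting subcategory. -/
def IsSupportTauTilting (T : Set C) : Prop :=
  S.IsTauRigid T ∧ ∀ P ∈ S.projClass, S.ApproxSeq T P

/-- Condition (A): every projective admits an admissible left `T`-approximation. -/
def CondA (T : Set C) : Prop :=
  ∀ P ∈ S.projClass, ∃ (T' : C) (f : P ⟶ T'), LeftApprox T f ∧ S.IsAdmissible f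

end TauTilt

section Relative

/-- `g` is a deflation of the full exact subcategory supported on `D` (i.e. it is part
of a conflation all of whose terms belong to `D`; the source and target are recorded
separately where needed). -/
def DeflationIn (D : Set C) {Y Z : C} (g : Y ⟶ Z) : Prop :=
  ∃ (X : C) (f : X ⟶ Y), X ∈ D ∧ S.IsConflation f g

/-- `P` is a projective object of the full exact subcategory supported on `D`. -/
def IsProjRel (D : Set C) (P : C) : Prop :=
  P ∈ D ∧ ∀ ⦃Y Z : C⦄ (g : Y ⟶ Z), Y ∈ D → Z ∈ D → S.DeflationIn D g →
    ∀ u : P ⟶ Z, ∃ v : P ⟶ Y, v ≫ g = u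

/-- `Ext¹(X,Y) = 0` computed in the full exact subcategory supported on `D`. -/
def ext1ZeroRel (D : Set C) (X Y : C) : Prop :=
  ∀ (E : C) (f : Y ⟶ E) (g : E ⟶ X), E ∈ D → S.IsConflation f g →
    ∃ s : X ⟶ E, s ≫ g = 𝟙 X

/-- `extSuccZeroRel S D n X Y` says `Ext^{n+1}(X, Y) = 0` in the full exact subcategory
supported on `D`, via dimension shifting along syzygies. -/
def extSuccZeroRel (D : Set C) : ℕ → C → C → Prop
  | 0 => fun X Y => S.ext1ZeroRel D X Y
  | (n+1) => fun X Y => ∀ (K P : C) (i : K ⟶ P) (p : P ⟶ X),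
      K ∈ D → S.IsProjRel D P → S.IsConflation i p → extSuccZeroRel D n K Y

/-- `Ext^{n+1}(X,Y) = 0` in the ambient exact category. -/
def extSuccZero (n : ℕ) (X Y : C) : Prop := S.extSuccZeroRel Set.univ n X Y

end Relative

section Tilting

variable [HasZeroObject C] [HasBinaryBiproducts C]

/-- A (1-)tilting subcategory of the ambient exact category (with enough projectives):
additively closed, self-orthogonal for all `Ext^i`, `i ≥ 1`, of projective dimension at
most one, and every projective admits a conflation `P ↣ T⁰ ↠ T¹` with `T⁰, T¹ ∈ T`. -/
def IsTilting (T : Set C) : Prop :=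
  AdditivelyClosed T ∧
  (∀ T1 ∈ T, ∀ T2 ∈ T, ∀ n : ℕ, S.extSuccZero n T1 T2) ∧
  (∀ T' ∈ T, ∀ Y : C, S.extSuccZero 1 T' Y) ∧
  (∀ P ∈ S.projClass, ∃ (T0 T1 : C) (f : P ⟶ T0) (g : T0 ⟶ T1),
    T0 ∈ T ∧ T1 ∈ T ∧ S.IsConflation f g)

/-- A tilting subcategory of the full exact subcategory supported on `D` (whose
projectives are the relative projectives). -/
def IsTiltingRel (D T : Set C) : Prop :=
  AdditivelyClosed T ∧ T ⊆ D ∧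
  (∀ T1 ∈ T, ∀ T2 ∈ T, ∀ n : ℕ, S.extSuccZeroRel D n T1 T2) ∧
  (∀ T' ∈ T, ∀ Y ∈ D, S.extSuccZeroRel D 1 T' Y) ∧
  (∀ P : C, S.IsProjRel D P → ∃ (T0 T1 : C) (f : P ⟶ T0) (g : T0 ⟶ T1),
    T0 ∈ T ∧ T1 ∈ T ∧ S.IsConflation f g)

end Tilting

section Pairs

/-- `⊥₁ D`. -/
def perp1 (D : Set C) : Set C := {X | ∀ Y ∈ D, S.ext1Zero X Y}

/-- `T^⊥₀`. -/
def perp0 (T : Set C) : Set C := {Y | ∀ T' ∈ T, ∀ f : T' ⟶ Y, f = 0}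

/-- A torsion class: closed under factor objects and extensions. -/
def IsTorsionClass (D : Set C) : Prop :=
  (∀ {X Y : C} (g : X ⟶ Y), X ∈ D → S.IsDeflation g → Y ∈ D) ∧
  (∀ {X Y Z : C} {f : X ⟶ Y} {g : Y ⟶ Z}, S.IsConflation f g → X ∈ D → Z ∈ D → Y ∈ D)

/-- A torsion pair `(D, F)`. -/
def IsTorsionPair (D F : Set C) : Prop :=
  (∀ X ∈ D, ∀ Y ∈ F, ∀ f : X ⟶ Y, f = 0) ∧
  (∀ X : C, ∃ (D0 F0 : C) (i : D0 ⟶ X) (p : X ⟶ F0), D0 ∈ D ∧ F0 ∈ F ∧ S.IsConflation i p)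

/-- A τ-cotorsion pair `(Cc, D)`. -/
def IsTauCotorsionPair (Cc D : Set C) : Prop :=
  Cc = S.perp1 D ∧
  ∀ P ∈ S.projClass, ∃ (K D0 C0 : C) (d : P ⟶ K) (i : K ⟶ D0) (g : D0 ⟶ C0),
    D0 ∈ Cc ∧ D0 ∈ D ∧ C0 ∈ Cc ∧ S.IsDeflation d ∧ S.IsConflation i g ∧
    LeftApprox D (d ≫ i)

/-- A (complete) cotorsion pair `(Cc, D)`. -/
def IsCotorsionPair (Cc D : Set C) : Prop :=
  SummandClosed Cc ∧ SummandClosed D ∧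
  (∀ X ∈ Cc, ∀ Y ∈ D, S.ext1Zero X Y) ∧
  (∀ X : C, ∃ (D0 C0 : C) (f : D0 ⟶ C0) (g : C0 ⟶ X),
    D0 ∈ D ∧ C0 ∈ Cc ∧ S.IsConflation f g) ∧
  (∀ X : C, ∃ (D1 C1 : C) (f : X ⟶ D1) (g : D1 ⟶ C1),
    D1 ∈ D ∧ C1 ∈ Cc ∧ S.IsConflation f g)

/-- Admissibly contravariantly finite subcategory. -/
def IsACF (T : Set C) : Prop :=
  ∀ X : C, ∃ (T' : C) (f : T' ⟶ X), RightApprox T f ∧ S.IsAdmissible f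

end Pairs

end ConflationStruct

/-- A weakly idempotent complete additive category: every section has a cokernel. -/
def WeaklyIdempotentComplete (C : Type u) [Category.{v} C] [Preadditive C] : Prop :=
  ∀ {X Y : C} (s : X ⟶ Y), (∃ r : Y ⟶ X, s ≫ r = 𝟙 X) → HasCokernel s


namespace ConflationStruct

variable {C : Type u} [Category.{v} C] [Preadditive C] (S : ConflationStruct C)

section ET

/-- Membership in the ideal `I` of the category of projectives: morphisms `f`
between projectives with `Hom(f, T') = 0` for all `T' ∈ T`. -/
def memIdeal (T : Set C) {Q Q' : C} (f : Q ⟶ Q') : Prop :=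
  S.IsProjObj Q ∧ S.IsProjObj Q' ∧ ∀ T' ∈ T, ∀ g : Q' ⟶ T', f ≫ g = 0

/-- `A_T`: the objects killed by the ideal `I`. -/
def AT (T : Set C) : Set C :=
  {X | ∀ ⦃Q Q' : C⦄ (f : Q ⟶ Q'), S.memIdeal T f → ∀ h : Q' ⟶ X, f ≫ h = 0}

/-- The conflation structure induced on a full subcategory: conflations of the
ambient category all of whose terms lie in the subcategory. -/
def structOn (D : Set C) : ConflationStruct (ObjectProperty.FullSubcategory (fun X : C => X ∈ D)) :=
  ⟨fun _ _ _ f g => S.IsConflation f.hom g.hom⟩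

variable [HasFiniteBiproducts C]

/-- `P_T`: additive closure of the images of admissible left `T`-approximations of
projectives. -/
def PTset (T : Set C) : Set C :=
  addOf {K | ∃ (Q T0 : C) (d : Q ⟶ K) (i : K ⟶ T0),
    S.IsProjObj Q ∧ S.IsDeflation d ∧ S.IsInflation i ∧ LeftApprox T (d ≫ i)}

end ET

section NTilting

/-- `T^⊥ = {Y | Ext^i(T', Y) = 0  for all i ≥ 1, T' ∈ T}`. -/
def rperp (T : Set C) : Set C :=
  {Y | ∀ T' ∈ T, ∀ n : ℕ, S.extSuccZero n T' Y}

/-- `Cores S D n X` : `X` admits an exact sequence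
`X ↣ Y₀ → ⋯ → Y_{n-1} ↠ Y_n` with all `Yᵢ ∈ D`. -/
def Cores (D : Set C) : ℕ → C → Prop
  | 0 => fun X => X ∈ D
  | (n+1) => fun X => ∃ (Y K : C) (i : X ⟶ Y) (p : Y ⟶ K),
      Y ∈ D ∧ S.IsConflation i p ∧ Cores D n K

/-- An `n`-tilting subcategory in the sense of Sauter: `T^⊥` has enough projectives
given by `T`, and every object has a `T^⊥`-coresolution of length `n`. -/
def IsNTilting (T : Set C) (n : ℕ) : Prop :=
  T ⊆ S.rperp T ∧
  (∀ T' ∈ T, ∀ Y ∈ S.rperp T, S.ext1Zero T' Y) ∧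
  (∀ Y ∈ S.rperp T, ∃ (K T' : C) (i : K ⟶ T') (p : T' ⟶ Y),
    T' ∈ T ∧ K ∈ S.rperp T ∧ S.IsConflation i p) ∧
  (∀ X : C, S.Cores (S.rperp T) n X)

/-- `P^{<∞}`: objects of finite projective dimension. -/
def Pfin : Set C := {X | ∃ n : ℕ, ∀ Y : C, S.extSuccZero n X Y}

end NTilting

section TauObj

variable [HasZeroObject C] [HasBinaryBiproducts C]

/-- Variant of `ApproxSeq` where the left approximation is required to be nonzero. -/
def ApproxSeqNonzero (T : Set C) (P : C) : Prop :=
  ∃ (K T0 T1 : C) (d : P ⟶ K) (i : K ⟶ T0) (g : T0 ⟶ T1),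
    T1 ∈ T ∧ S.IsDeflation d ∧ S.IsConflation i g ∧ LeftApprox T (d ≫ i) ∧ d ≫ i ≠ 0

/-- A τ-tilting subcategory: support τ-tilting such that every nonzero projective
admits a nonzero such approximation sequence. -/
def IsTauTiltingSubcat (T : Set C) : Prop :=
  S.IsSupportTauTilting T ∧ ∀ P ∈ S.projClass, ¬ IsZero P → S.ApproxSeqNonzero T P

end TauObj

end ConflationStruct

section K0

variable {C : Type u} [Category.{v} C] [Preadditive C]

/-- Relations for the Grothendieck group of an exact subcategory: conflation
relations together with isomorphism relations. -/
def K0ExRels (S : ConflationStruct C) (D : Set C) :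
    Set (FreeAbelianGroup {X : C // X ∈ D}) :=
  {x | (∃ (A B E : {X : C // X ∈ D}) (f : (A : C) ⟶ (B : C)) (g : (B : C) ⟶ (E : C)),
          S.IsConflation f g ∧
          x = FreeAbelianGroup.of B - FreeAbelianGroup.of A - FreeAbelianGroup.of E) ∨
       (∃ (A B : {X : C // X ∈ D}), Nonempty ((A : C) ≅ (B : C)) ∧
          x = FreeAbelianGroup.of A - FreeAbelianGroup.of B)}

/-- The Grothendieck group of the full exact subcategory supported on `D`. -/
def K0Ex (S : ConflationStruct C) (D : Set C) :=
  FreeAbelianGroup {X : C // X ∈ D} ⧸ AddSubgroup.closure (K0ExRels S D)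

noncomputable instance (S : ConflationStruct C) (D : Set C) : AddCommGroup (K0Ex S D) :=
  QuotientAddGroup.Quotient.addCommGroup _

variable [HasBinaryBiproducts C]

/-- Relations for the split Grothendieck group of an additive subcategory. -/
def K0SplitRels (T : Set C) : Set (FreeAbelianGroup {X : C // X ∈ T}) :=
  {x | (∃ (A B E : {X : C // X ∈ T}), Nonempty ((E : C) ≅ (A : C) ⊞ (B : C)) ∧
          x = FreeAbelianGroup.of E - FreeAbelianGroup.of A - FreeAbelianGroup.of B) ∨
       (∃ (A B : {X : C // X ∈ T}), Nonempty ((A : C) ≅ (B : C)) ∧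
          x = FreeAbelianGroup.of A - FreeAbelianGroup.of B)}

/-- The split Grothendieck group of the additive subcategory supported on `T`. -/
def K0Split (T : Set C) :=
  FreeAbelianGroup {X : C // X ∈ T} ⧸ AddSubgroup.closure (K0SplitRels T)

noncomputable instance (T : Set C) : AddCommGroup (K0Split T) :=
  QuotientAddGroup.Quotient.addCommGroup _

end K0

end TauTilting

/-!
The condition defining `A_T`, that `f ≫ h = 0` for all `f : Q ⟶ Q'` in `I` and `h : Q' ⟶ X`,
passes to subobjects, to direct sums and, because `Q'` is projective, to quotients by deflations.
These closure properties are enough for the conflations with terms in `A_T` to satisfy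
Quillen's axioms: a pushout of a conflation is a quotient of a direct sum by a deflation, and a
pullback is a subobject of a direct sum.

Let `Q ↠ K ↣ T'` be an admissible left `T`-approximation of a projective `Q` and `L ↣ Q ↠ K` a
conflation. Composing `L ↣ Q` with a projective cover of `L` gives a map in `I`, so every map from
`Q` to an object of `A_T` factors through `Q ↠ K`. This makes `K` projective in `E_T`. It also
factors a deflation `Q ↠ X` with `X ∈ A_T` as `Q ↠ K → X`, and by weak idempotent completeness
`K → X` is again a deflation, whose kernel is a subobject of `K`.
-/

namespace TauTilting

open Category

section Kernels

variable {C : Type u} [Category.{v} C] [Preadditive C]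

theorem isPullback_biprod_fst_desc [HasBinaryBiproducts C] {A B D K : C} (f : A ⟶ B)
    {g : B ⟶ D} {k : K ⟶ B} {w : k ≫ g = 0} (hk : IsLimit (KernelFork.ofι k w)) :
    IsPullback (biprod.fst : A ⊞ K ⟶ A) (biprod.desc f k) (f ≫ g) g := by
  have : Mono k := Fork.IsLimit.mono hk
  have hlift (s : PullbackCone (f ≫ g) g) : (s.snd - s.fst ≫ f) ≫ g = 0 := by
    simp [← s.condition]
  refine IsPullback.of_isLimit (c := PullbackCone.mk (biprod.fst : A ⊞ K ⟶ A) (biprod.desc f k)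
    (by ext <;> simp [w])) ?_
  refine PullbackCone.IsLimit.mk _
    (fun s => biprod.lift s.fst (KernelFork.IsLimit.lift' hk _ (hlift s)).1)
    (fun s => by simp) (fun s => ?_) (fun s m h₁ h₂ => ?_)
  · have := (KernelFork.IsLimit.lift' hk _ (hlift s)).2
    simp only [Fork.ι_ofι] at this
    simp [this]
  · refine biprod.hom_ext _ _ (by simpa using h₁) ((cancel_mono k).1 ?_)
    have := (KernelFork.IsLimit.lift' hk _ (hlift s)).2
    simp only [Fork.ι_ofι] at this
    rw [biprod.lift_snd, this, ← h₂, ← h₁, biprod.desc_eq]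
    simp

noncomputable def isLimitKernelForkCompOfIsPullback {W A B D K : C} {h : W ⟶ A} {g' : W ⟶ B}
    {f : A ⟶ D} {g : B ⟶ D} (hpb : IsPullback h g' f g) {e : K ⟶ W} {w : e ≫ h = 0}
    (he : IsLimit (KernelFork.ofι e w)) :
    IsLimit (KernelFork.ofι (e ≫ g') (by rw [assoc, ← hpb.w, reassoc_of% w, zero_comp])) := by
  have : Mono e := Fork.IsLimit.mono he
  have : Mono (e ≫ g') := ⟨fun a b hab => (cancel_mono e).1 (hpb.hom_ext (by simp [w])
    (by simpa using hab))⟩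
  refine KernelFork.IsLimit.ofι' _ _ fun t ht => ?_
  let ⟨l, hl⟩ := KernelFork.IsLimit.lift' he (hpb.lift 0 t (by simp [ht])) (by simp)
  exact ⟨l, by simp only [Fork.ι_ofι] at hl; simp [reassoc_of% hl]⟩

theorem WeaklyIdempotentComplete.hasKernel (hC : WeaklyIdempotentComplete C) {A W : C}
    {s : A ⟶ W} {r : W ⟶ A} (hsr : s ≫ r = 𝟙 A) : HasKernel r := by
  have := hC s ⟨r, hsr⟩
  let e : cokernel s ⟶ W := cokernel.desc s (𝟙 W - r ≫ s) (by simp [reassoc_of% hsr])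
  have he : cokernel.π s ≫ e = 𝟙 W - r ≫ s := cokernel.π_desc _ _ _
  have : Mono e := mono_of_mono_fac (show e ≫ cokernel.π s = 𝟙 _ by
    rw [← cancel_epi (cokernel.π s), reassoc_of% he]; simp)
  refine HasLimit.mk ⟨_, KernelFork.IsLimit.ofι' e (w := by
    rw [← cancel_epi (cokernel.π s), reassoc_of% he]; simp [hsr])
    fun t ht => ⟨t ≫ cokernel.π s, by simp [he, reassoc_of% ht]⟩⟩

end Kernels

theorem subset_addOf {C : Type u} [Category.{v} C] [Preadditive C] [HasFiniteBiproducts C]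
    (s : Set C) : s ⊆ addOf s :=
  fun X hX => ⟨1, fun _ => X, fun _ => hX, biproduct.ι (fun _ : Fin 1 => X) 0,
    biproduct.π (fun _ : Fin 1 => X) 0, biproduct.ι_π_self _ _⟩

namespace ConflationStruct

namespace IsExactStructure

variable {C : Type u} [Category.{v} C] [Preadditive C] {S : ConflationStruct C}

section Basic

variable {X Y Z : C} {f : X ⟶ Y} {g : Y ⟶ Z}

theorem comp_eq_zero (hS : S.IsExactStructure) (h : S.IsConflation f g) : f ≫ g = 0 :=
  (hS.ker_coker h).choose

noncomputable def isLimit (hS : S.IsExactStructure) (h : S.IsConflation f g) :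
    IsLimit (KernelFork.ofι f (hS.comp_eq_zero h)) :=
  (hS.ker_coker h).choose_spec.1.some

noncomputable def isColimit (hS : S.IsExactStructure) (h : S.IsConflation f g) :
    IsColimit (CokernelCofork.ofπ g (hS.comp_eq_zero h)) :=
  (hS.ker_coker h).choose_spec.2.some

theorem mono (hS : S.IsExactStructure) (hf : S.IsInflation f) : Mono f :=
  let ⟨_, _, h⟩ := hf
  Fork.IsLimit.mono (hS.isLimit h)

theorem epi (hS : S.IsExactStructure) (hg : S.IsDeflation g) : Epi g :=
  let ⟨_, _, h⟩ := hg
  Cofork.IsColimit.epi (hS.isColimit h)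

theorem exists_lift (hS : S.IsExactStructure) (h : S.IsConflation f g) {W : C} (t : W ⟶ Y)
    (ht : t ≫ g = 0) : ∃ u : W ⟶ X, u ≫ f = t :=
  let ⟨u, hu⟩ := KernelFork.IsLimit.lift' (hS.isLimit h) t ht
  ⟨u, hu⟩

theorem exists_desc (hS : S.IsExactStructure) (h : S.IsConflation f g) {W : C} (t : Y ⟶ W)
    (ht : f ≫ t = 0) : ∃ u : Z ⟶ W, g ≫ u = t :=
  let ⟨u, hu⟩ := CokernelCofork.IsColimit.desc' (hS.isColimit h) t ht
  ⟨u, hu⟩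

theorem isConflation_comp_iso (hS : S.IsExactStructure) (h : S.IsConflation f g) {Y' : C}
    (e : Y ≅ Y') : S.IsConflation (f ≫ e.hom) (e.inv ≫ g) := by
  simpa using hS.iso_closed (Iso.refl X) e.symm (Iso.refl Z) h

theorem isConflation_of_isLimit (hS : S.IsExactStructure) (h : S.IsConflation f g) {K : C}
    {k : K ⟶ Y} {w : k ≫ g = 0} (hk : IsLimit (KernelFork.ofι k w)) : S.IsConflation k g := by
  let e := hk.conePointUniqueUpToIso (hS.isLimit h)
  have he : e.hom ≫ f = k := hk.conePointUniqueUpToIso_hom_comp _ WalkingParallelPair.zero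
  simpa [he] using hS.iso_closed e (Iso.refl Y) (Iso.refl Z) h

theorem isConflation_of_isColimit (hS : S.IsExactStructure) (h : S.IsConflation f g) {Q : C}
    {q : Y ⟶ Q} {w : f ≫ q = 0} (hq : IsColimit (CokernelCofork.ofπ q w)) :
    S.IsConflation f q := by
  let e := (hS.isColimit h).coconePointUniqueUpToIso hq
  have he : g ≫ e.hom = q :=
    (hS.isColimit h).comp_coconePointUniqueUpToIso_hom _ WalkingParallelPair.one
  simpa [he] using hS.iso_closed (Iso.refl X) (Iso.refl Y) e.symm h

theorem isInflation_iso (hS : S.IsExactStructure) (e : X ≅ Y) : S.IsInflation e.hom :=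
  let ⟨_, _, h⟩ := hS.id_inflation X
  ⟨_, _, by simpa using hS.isConflation_comp_iso h e⟩

theorem isZero_of_isConflation_id (hS : S.IsExactStructure) {k : X ⟶ Y}
    (h : S.IsConflation k (𝟙 Y)) : IsZero X := by
  have := hS.mono ⟨_, _, h⟩
  rw [IsZero.iff_id_eq_zero, ← cancel_mono k]
  simpa using hS.comp_eq_zero h

end Basic

section Pushout

variable {X Y Z P : C} {f : X ⟶ Y} {g : X ⟶ Z} {inl : Y ⟶ P} {inr : Z ⟶ P}

theorem isInflation_of_isPushout (hS : S.IsExactStructure) (hf : S.IsInflation f)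
    (hpo : IsPushout f g inl inr) : S.IsInflation inr := by
  obtain ⟨_, _, _, hpo', _, _, h⟩ := hS.pushout_inflation f g hf
  have := hS.isConflation_comp_iso h (hpo'.isoIsPushout _ _ hpo)
  rw [IsPushout.inr_isoIsPushout_hom] at this
  exact ⟨_, _, this⟩

theorem isDeflation_of_isPullback (hS : S.IsExactStructure) {g : Y ⟶ P} {h : Z ⟶ P}
    {fst : X ⟶ Y} {snd : X ⟶ Z} (hg : S.IsDeflation g) (hpb : IsPullback fst snd g h) :
    S.IsDeflation snd := by
  obtain ⟨_, _, _, hpb', _, _, h⟩ := hS.pullback_deflation g h hg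
  have := hS.isConflation_comp_iso h (hpb.isoIsPullback _ _ hpb').symm
  rw [Iso.symm_inv, IsPullback.isoIsPullback_hom_snd] at this
  exact ⟨_, _, this⟩

theorem isConflation_of_isPushout (hS : S.IsExactStructure) {W : C} {c : Y ⟶ W}
    (h : S.IsConflation f c) (hpo : IsPushout f g inl inr) :
    S.IsConflation inr (hpo.desc c 0 (by simp [hS.comp_eq_zero h])) := by
  obtain ⟨_, _, hinr⟩ := hS.isInflation_of_isPushout ⟨_, _, h⟩ hpo
  have := hS.epi ⟨_, _, h⟩
  have := epi_of_epi_fac (hpo.inl_desc c 0 (by simp [hS.comp_eq_zero h]))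
  refine hS.isConflation_of_isColimit hinr
    (CokernelCofork.IsColimit.ofπ' _ (hpo.inr_desc _ _ _) fun t ht => ?_)
  have hft : f ≫ inl ≫ t = 0 := by rw [reassoc_of% hpo.w, ht, comp_zero]
  let ⟨s, hs⟩ := CokernelCofork.IsColimit.desc' (hS.isColimit h) _ hft
  exact ⟨s, hpo.hom_ext (by simpa using hs) (by simpa using ht.symm)⟩

variable [HasBinaryBiproducts C]

theorem isInflation_biprod_inl (hS : S.IsExactStructure) (X Y : C) :
    S.IsInflation (biprod.inl : X ⟶ X ⊞ Y) := by
  obtain ⟨K, k, h⟩ := hS.id_deflation Y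
  have hK := hS.isZero_of_isConflation_id h
  rw [hK.eq_of_src k (hK.isInitial.to Y)] at h
  exact hS.isInflation_of_isPushout ⟨_, _, h⟩
    (IsPushout.of_isColimit_binaryCofan_of_isInitial (BinaryBiproduct.isColimit X Y) hK.isInitial)

theorem isInflation_biprod_map_id (hS : S.IsExactStructure) (hf : S.IsInflation f) (W : C) :
    S.IsInflation (biprod.map f (𝟙 W)) := by
  refine hS.isInflation_of_isPushout hf (inr := biprod.map f (𝟙 W)) (IsPushout.of_isColimit
    (c := PushoutCocone.mk biprod.inl _ (biprod.inl_map f (𝟙 W)).symm) ?_)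
  refine PushoutCocone.IsColimit.mk _ (fun s => biprod.desc s.inl (biprod.inr ≫ s.inr))
    (fun s => by simp) (fun s => ?_) (fun s m h₁ h₂ => ?_)
  · ext
    · simpa using s.condition
    · simp
  · ext
    · simpa using h₁
    · simpa using biprod.inr ≫= h₂

theorem isInflation_biprod_lift_neg (hS : S.IsExactStructure) (hf : S.IsInflation f) :
    S.IsInflation (biprod.lift f (-g)) := by
  have : biprod.lift f (-g) = biprod.inl ≫ (Biprod.unipotentUpper (-g)).hom ≫
      biprod.map f (𝟙 Z) := by
    ext <;> simp [Biprod.ofComponents]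
  rw [this]
  exact hS.inflation_comp (hS.isInflation_biprod_inl X Z)
    (hS.inflation_comp (hS.isInflation_iso _) (hS.isInflation_biprod_map_id hf Z))

theorem isDeflation_desc_of_isPushout (hS : S.IsExactStructure) (hf : S.IsInflation f)
    (hpo : IsPushout f g inl inr) : S.IsDeflation (biprod.desc inl inr) :=
  let ⟨_, _, h⟩ := hS.isInflation_biprod_lift_neg (g := g) hf
  ⟨_, _, hS.isConflation_of_isColimit h hpo.isColimitCokernelCofork⟩

end Pushout

section Cancellation

variable [HasBinaryBiproducts C] {A B D K : C} {f : A ⟶ B} {g : B ⟶ D}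

/-- The "obscure axiom" of Bühler, *Exact categories*, Proposition 2.16. -/
theorem isConflation_of_isLimit_of_isDeflation_comp (hS : S.IsExactStructure) {k : K ⟶ B}
    {w : k ≫ g = 0} (hk : IsLimit (KernelFork.ofι k w)) (hfg : S.IsDeflation (f ≫ g)) :
    S.IsConflation k g := by
  have : Mono k := Fork.IsLimit.mono hk
  obtain ⟨M, m₀, hm₀⟩ := hfg
  obtain ⟨φ, hφ⟩ := KernelFork.IsLimit.lift' hk (m₀ ≫ f) (by simp [hS.comp_eq_zero hm₀])
  simp only [Fork.ι_ofι] at hφ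
  have hpb := isPullback_biprod_fst_desc f hk
  obtain ⟨N, m, hm⟩ := hS.isDeflation_of_isPullback ⟨_, _, hm₀⟩ hpb
  -- `k` is the pushout of `m₀` along `φ`: `biprod.desc f k` is a deflation, as a pullback of
  -- `f ≫ g`, and its kernel `m` factors through `biprod.lift m₀ (-φ)`.
  obtain ⟨μ, hμ⟩ := hS.exists_lift hm₀ (m ≫ biprod.fst) (by
    rw [assoc, hpb.w, reassoc_of% hS.comp_eq_zero hm, zero_comp])
  have hmμ : μ ≫ biprod.lift m₀ (-φ) = m := by
    have hm0 : m ≫ biprod.snd ≫ k = -(m ≫ biprod.fst ≫ f) := by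
      rw [eq_neg_iff_add_eq_zero, add_comm]
      simpa [biprod.desc_eq] using hS.comp_eq_zero hm
    refine biprod.hom_ext _ _ (by simpa using hμ) ((cancel_mono k).1 ?_)
    simp [hφ, reassoc_of% hμ, hm0]
  have sq : CommSq m₀ φ f k := ⟨hφ.symm⟩
  have hcoker : IsColimit sq.cokernelCofork := by
    have : Epi (biprod.desc f k) := hS.epi ⟨_, _, hm⟩
    refine CokernelCofork.IsColimit.ofπ' (hp := this) _ _ fun t ht => ?_
    let ⟨s, hs⟩ := CokernelCofork.IsColimit.desc' (hS.isColimit hm) t (by rw [← hmμ, assoc, ht,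
      comp_zero])
    exact ⟨s, hs⟩
  have hpo : IsPushout m₀ φ f k := ⟨sq, ⟨sq.isColimitEquivIsColimitCokernelCofork.symm hcoker⟩⟩
  have hdesc : hpo.desc (f ≫ g) 0 (by simp [hS.comp_eq_zero hm₀]) = g :=
    (hpo.hom_ext (by simp) (by simp [w])).symm
  simpa [hdesc] using hS.isConflation_of_isPushout hm₀ hpo

/-- Bühler, *Exact categories*, Proposition 7.6: the pullback of `f ≫ g` along `g` has `A` as a
retract, weak idempotent completeness gives a kernel of the retraction, hence one of `g`, and
Proposition 2.16 applies. -/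
theorem isDeflation_of_isDeflation_comp (hS : S.IsExactStructure)
    (hC : WeaklyIdempotentComplete C) (hfg : S.IsDeflation (f ≫ g)) : S.IsDeflation g := by
  obtain ⟨W, h, g', hpb, -⟩ := hS.pullback_deflation (f ≫ g) g hfg
  have := hC.hasKernel (hpb.lift_fst (𝟙 A) f (by simp))
  exact ⟨_, _, hS.isConflation_of_isLimit_of_isDeflation_comp
    (isLimitKernelForkCompOfIsPullback hpb (w := kernel.condition h) (kernelIsKernel h)) hfg⟩

end Cancellation

section FullSubcategory

variable {D : Set C}

theorem structOn_ker_coker (hS : S.IsExactStructure)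
    {X Y Z : ObjectProperty.FullSubcategory fun A : C => A ∈ D} {f : X ⟶ Y} {g : Y ⟶ Z}
    (h : (S.structOn D).IsConflation f g) :
    ∃ w : f ≫ g = 0, Nonempty (IsLimit (KernelFork.ofι f w)) ∧
      Nonempty (IsColimit (CokernelCofork.ofπ g w)) := by
  let ι := ObjectProperty.ι fun A : C => A ∈ D
  have h : S.IsConflation f.hom g.hom := h
  exact ⟨ObjectProperty.hom_ext _ (hS.comp_eq_zero h),
    ⟨isLimitOfReflects ι ((KernelFork.isLimitMapConeEquiv _ ι).symm (hS.isLimit h))⟩,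
    ⟨isColimitOfReflects ι ((CokernelCofork.isColimitMapCoconeEquiv _ ι).symm (hS.isColimit h))⟩⟩

variable [HasBinaryBiproducts C]

theorem structOn (hS : S.IsExactStructure)
    (mem_of_mono : ∀ {X Y : C} (i : X ⟶ Y) [Mono i], Y ∈ D → X ∈ D)
    (mem_of_isDeflation : ∀ {Y Z : C} {p : Y ⟶ Z}, S.IsDeflation p → Y ∈ D → Z ∈ D)
    (biprod_mem : ∀ {X Y : C}, X ∈ D → Y ∈ D → (X ⊞ Y) ∈ D) :
    (S.structOn D).IsExactStructure := by
  let ι := ObjectProperty.ι fun X : C => X ∈ D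
  constructor
  · exact hS.structOn_ker_coker
  · intro _ _ _ _ _ _ eX eY eZ _ _ h
    exact hS.iso_closed (ι.mapIso eX) (ι.mapIso eY) (ι.mapIso eZ) h
  · intro X
    obtain ⟨Z, c, h⟩ := hS.id_inflation X.obj
    exact ⟨⟨Z, mem_of_isDeflation ⟨_, _, h⟩ X.property⟩, ObjectProperty.homMk c, h⟩
  · intro X
    obtain ⟨K, k, h⟩ := hS.id_deflation X.obj
    have := hS.mono ⟨_, _, h⟩
    exact ⟨⟨K, mem_of_mono k X.property⟩, ObjectProperty.homMk k, h⟩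
  · rintro X Y Z f g ⟨_, _, hf⟩ ⟨_, _, hg⟩
    obtain ⟨W, c, h⟩ := hS.inflation_comp ⟨_, _, hf⟩ ⟨_, _, hg⟩
    exact ⟨⟨W, mem_of_isDeflation ⟨_, _, h⟩ Z.property⟩, ObjectProperty.homMk c, h⟩
  · rintro X Y Z f g ⟨_, _, hf⟩ ⟨_, _, hg⟩
    obtain ⟨K, k, h⟩ := hS.deflation_comp ⟨_, _, hf⟩ ⟨_, _, hg⟩
    have := hS.mono ⟨_, _, h⟩
    exact ⟨⟨K, mem_of_mono k X.property⟩, ObjectProperty.homMk k, h⟩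
  · rintro X Y Z f g ⟨V, c, hc⟩
    obtain ⟨P, inl, inr, hpo, -⟩ := hS.pushout_inflation f.hom g.hom ⟨_, _, hc⟩
    have hP : P ∈ D := mem_of_isDeflation (hS.isDeflation_desc_of_isPushout ⟨_, _, hc⟩ hpo)
      (biprod_mem Y.property Z.property)
    refine ⟨⟨P, hP⟩, ObjectProperty.homMk inl, ObjectProperty.homMk inr,
      IsPushout.of_map_of_faithful ι hpo, V, ObjectProperty.homMk _,
      hS.isConflation_of_isPushout hc hpo⟩
  · rintro X Y Z f g ⟨K, k, hk⟩
    obtain ⟨W, fst, snd, hpb, hsnd⟩ := hS.pullback_deflation f.hom g.hom ⟨_, _, hk⟩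
    have : Mono (biprod.lift fst snd) := hpb.mono_shortComplex'_f
    have hW : W ∈ D := mem_of_mono (biprod.lift fst snd) (biprod_mem X.property Y.property)
    obtain ⟨N, n, hn⟩ := hsnd
    have := hS.mono ⟨_, _, hn⟩
    exact ⟨⟨W, hW⟩, ObjectProperty.homMk fst, ObjectProperty.homMk snd,
      IsPullback.of_map_of_faithful ι hpb, ⟨N, mem_of_mono n hW⟩, ObjectProperty.homMk n, hn⟩

end FullSubcategory

end IsExactStructure

variable {C : Type u} [Category.{v} C] [Preadditive C] {S : ConflationStruct C}

section Relative

variable {D : Set C}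

theorem IsProjRel.of_retract {K M : C} (hM : S.IsProjRel D M) (i : K ⟶ M) (r : M ⟶ K)
    (hir : i ≫ r = 𝟙 K) (hK : K ∈ D) : S.IsProjRel D K := by
  refine ⟨hK, fun Y Z g hY hZ hg u => ?_⟩
  obtain ⟨v, hv⟩ := hM.2 g hY hZ hg (r ≫ u)
  exact ⟨i ≫ v, by simp [hv, reassoc_of% hir]⟩

theorem IsProjRel.biproduct [HasFiniteBiproducts C] {n : ℕ} {f : Fin n → C}
    (hf : ∀ j, S.IsProjRel D (f j)) (hD : (⨁ f) ∈ D) : S.IsProjRel D (⨁ f) := by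
  refine ⟨hD, fun Y Z g hY hZ hg u => ?_⟩
  choose v hv using fun j => (hf j).2 g hY hZ hg (biproduct.ι f j ≫ u)
  exact ⟨biproduct.desc v, biproduct.hom_ext' _ _ fun j => by simp [hv]⟩

end Relative

section AT

variable {T : Set C}

theorem mem_AT_of_mem {X : C} (hX : X ∈ T) : X ∈ S.AT T :=
  fun _ _ _ hf h => hf.2.2 _ hX h

theorem mem_AT_of_mono {X Y : C} (i : X ⟶ Y) [Mono i] (hY : Y ∈ S.AT T) : X ∈ S.AT T :=
  fun _ _ f hf h => (cancel_mono i).1 (by simpa using hY f hf (h ≫ i))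

theorem mem_AT_of_isDeflation {Y Z : C} {p : Y ⟶ Z} (hp : S.IsDeflation p) (hY : Y ∈ S.AT T) :
    Z ∈ S.AT T := by
  intro _ _ f hf h
  obtain ⟨h', rfl⟩ := hf.2.1 p hp h
  simp [reassoc_of% hY f hf h']

theorem biprod_mem_AT [HasBinaryBiproducts C] {X Y : C} (hX : X ∈ S.AT T) (hY : Y ∈ S.AT T) :
    (X ⊞ Y) ∈ S.AT T :=
  fun _ _ f hf h => biprod.hom_ext _ _ (by simpa using hX f hf (h ≫ biprod.fst))
    (by simpa using hY f hf (h ≫ biprod.snd))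

theorem biproduct_mem_AT [HasFiniteBiproducts C] {n : ℕ} {f : Fin n → C}
    (hf : ∀ j, f j ∈ S.AT T) : (⨁ f) ∈ S.AT T :=
  fun _ _ g hg h => biproduct.hom_ext _ _ fun j => by simpa using hf j g hg (h ≫ biproduct.π f j)

theorem IsExactStructure.structOn_AT [HasBinaryBiproducts C] (hS : S.IsExactStructure) :
    (S.structOn (S.AT T)).IsExactStructure :=
  hS.structOn (fun i _ hY => mem_AT_of_mono i hY) mem_AT_of_isDeflation biprod_mem_AT

theorem comp_eq_zero_of_mem_AT (hS : S.IsExactStructure) (hP : S.HasEnoughProjectives)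
    {Q K L T₀ X : C} (hQ : S.IsProjObj Q) {k : L ⟶ Q} {d : Q ⟶ K} (hkd : S.IsConflation k d)
    {i : K ⟶ T₀} (hdi : LeftApprox T (d ≫ i)) (hX : X ∈ S.AT T) (h : Q ⟶ X) : k ≫ h = 0 := by
  obtain ⟨R, π, hR, hπ⟩ := hP L
  have hI : S.memIdeal T (π ≫ k) := ⟨hR, hQ, fun T' hT' γ => by
    obtain ⟨v, rfl⟩ := hdi.2 T' hT' γ
    simp [reassoc_of% hS.comp_eq_zero hkd]⟩
  have := hS.epi hπ
  exact (cancel_epi π).1 (by simpa using hX _ hI h)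

theorem isProjRel_AT_of_leftApprox (hS : S.IsExactStructure) (hP : S.HasEnoughProjectives)
    {Q K T₀ : C} (hQ : S.IsProjObj Q) {d : Q ⟶ K} {i : K ⟶ T₀} (hd : S.IsDeflation d)
    (hi : S.IsInflation i) (hdi : LeftApprox T (d ≫ i)) : S.IsProjRel (S.AT T) K := by
  have := hS.mono hi
  refine ⟨mem_AT_of_mono i (mem_AT_of_mem hdi.1), fun Y Z g hY _ ⟨_, _, _, hg⟩ u => ?_⟩
  obtain ⟨L, k, hkd⟩ := hd
  obtain ⟨w, hw⟩ := hQ g ⟨_, _, hg⟩ (d ≫ u)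
  obtain ⟨v, rfl⟩ := hS.exists_desc hkd w (comp_eq_zero_of_mem_AT hS hP hQ hkd hdi hY w)
  have := hS.epi ⟨_, _, hkd⟩
  exact ⟨v, (cancel_epi d).1 (by simpa using hw)⟩

theorem isProjRel_AT_of_mem_PTset [HasFiniteBiproducts C] (hS : S.IsExactStructure)
    (hP : S.HasEnoughProjectives) {K : C} (hK : K ∈ S.PTset T) : S.IsProjRel (S.AT T) K := by
  obtain ⟨n, f, hf, i, r, hir⟩ := hK
  have hgen (j : Fin n) : S.IsProjRel (S.AT T) (f j) :=
    let ⟨_, _, _, _, hQ, hd, hi, hdi⟩ := hf j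
    isProjRel_AT_of_leftApprox hS hP hQ hd hi hdi
  have : IsSplitMono i := IsSplitMono.mk' ⟨r, hir⟩
  have hsum := IsProjRel.biproduct hgen (biproduct_mem_AT fun j => (hgen j).1)
  exact hsum.of_retract i r hir (mem_AT_of_mono i hsum.1)

theorem exists_isConflation_of_mem_AT [HasFiniteBiproducts C] (hS : S.IsExactStructure)
    (hP : S.HasEnoughProjectives) (hC : WeaklyIdempotentComplete C) (hA : S.CondA T) {X : C}
    (hX : X ∈ S.AT T) : ∃ (K Y : C) (i : Y ⟶ K) (p : K ⟶ X),
      K ∈ S.PTset T ∧ Y ∈ S.AT T ∧ S.IsConflation i p := by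
  have : HasBinaryBiproducts C := hasBinaryBiproducts_of_finite_biproducts C
  obtain ⟨Q, p, hQ, hp⟩ := hP X
  obtain ⟨T₀, _, hdi, K, d, i, ⟨L, k, hkd⟩, hi, rfl⟩ := hA Q hQ
  obtain ⟨p', rfl⟩ := hS.exists_desc hkd p (comp_eq_zero_of_mem_AT hS hP hQ hkd hdi hX p)
  obtain ⟨Y, y, hyp'⟩ := hS.isDeflation_of_isDeflation_comp hC hp
  have := hS.mono hi
  have := hS.mono ⟨_, _, hyp'⟩
  have hK : K ∈ S.AT T := mem_AT_of_mono i (mem_AT_of_mem hdi.1)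
  exact ⟨K, Y, y, p', subset_addOf _ ⟨Q, T₀, d, i, hQ, ⟨L, k, hkd⟩, hi, hdi⟩,
    mem_AT_of_mono y hK, hyp'⟩

end AT

end ConflationStruct

theorem ET_exact_with_enough_projectives_general
    {C : Type u} [Category.{v} C] [Preadditive C] [HasFiniteBiproducts C]
    (S : ConflationStruct C) (hS : S.IsExactStructure) (hP : S.HasEnoughProjectives)
    (hWIC : WeaklyIdempotentComplete C)
    (T : Set C) (hA : S.CondA T) :
    (S.structOn (S.AT T)).IsExactStructure ∧
    (∀ K ∈ S.PTset T, K ∈ S.AT T ∧ S.IsProjRel (S.AT T) K) ∧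
    (∀ X ∈ S.AT T, ∃ (K Y : C) (i : Y ⟶ K) (p : K ⟶ X),
        K ∈ S.PTset T ∧ Y ∈ S.AT T ∧ S.IsConflation i p) := by
  have : HasBinaryBiproducts C := hasBinaryBiproducts_of_finite_biproducts C
  refine ⟨hS.structOn_AT, fun K hK => ?_,
    fun X hX => ConflationStruct.exists_isConflation_of_mem_AT hS hP hWIC hA hX⟩
  have hK := ConflationStruct.isProjRel_AT_of_mem_PTset hS hP hK
  exact ⟨hK.1, hK⟩

/-- `E_T = (A_T, S_T)` is an exact category with enough projectives
given by `P_T`. -/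
theorem ET_exact_with_enough_projectives
    {C : Type u} [Category.{v} C] [Preadditive C] [HasZeroObject C] [HasFiniteBiproducts C]
    [EssentiallySmall.{v} C]
    (S : ConflationStruct C) (hS : S.IsExactStructure) (hP : S.HasEnoughProjectives)
    (hWIC : WeaklyIdempotentComplete C)
    (T : Set C) (hA : S.CondA T) :
    (S.structOn (S.AT T)).IsExactStructure ∧
    (∀ K ∈ S.PTset T, K ∈ S.AT T ∧ S.IsProjRel (S.AT T) K) ∧
    (∀ X ∈ S.AT T, ∃ (K Y : C) (i : Y ⟶ K) (p : K ⟶ X),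
        K ∈ S.PTset T ∧ Y ∈ S.AT T ∧ S.IsConflation i p) :=
  ET_exact_with_enough_projectives_general S hS hP hWIC T hA

end TauTilting
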